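/- Let L be a finite relational language, H a hereditary L-property, φ(x̄;ȳ) a quantifier-free L-formula, ℓ ≥ 0, and N ≥ m ≥ 1 integers. There exists K₀ (depending on φ, ℓ, N, m) such that for all K ≥ K₀: if 𝔸 is an (ℓ,|ȳ|)-box of height K with |S_φ^H(𝔸)| = 2^{K^ℓ}, 𝔸′ ⊆ 𝔸 is a sub-box of height m, and |S_{φ,K}^H(𝔸,ρ)| = 2^{K^{ℓ+1}} for some ρ ∈ S_{2|x̄|}^∅(𝔸), then |S_{φ,m}^H(𝔸′, ρ↾_{𝔸′})| = 2^{m^{ℓ+1}}, and there exist M ∈ H and 𝔻 ⊆ M^{m·|x̄|} such that 𝔻 contains one realization of every element of S_{φ,m}^H(𝔸′, ρ↾_{𝔸′}) and M contains at least N elements lying neither in the underlying set of 𝔸′ nor among the coordinates of any tuple of 𝔻. -/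
import Mathlib


open FirstOrder Set Function Filter

universe u v w

namespace PaperVC

/-- `𝔸` is an `(ℓ,t)`-box of height `m` in `X`: it is a concatenation product `A₁ ⋯ A_ℓ` of sets
`A_i ⊆ X^{k_i}` (`k_i ≥ 1`, `k₁+⋯+k_ℓ = t`); the fibers of a monotone surjection
`c : Fin t → Fin ℓ` encode the consecutive blocks of coordinates, and each `A_i` has size `m`.
By convention a `(0,t)`-box with `t ≥ 1` is a singleton, and a `(0,0)`-box is the empty set. -/
def IsBoxOfHeight (X : Type*) (ℓ t m : ℕ) (𝔸 : Set (Fin t → X)) : Prop :=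
  (ℓ = 0 ∧ t = 0 ∧ 𝔸 = ∅) ∨
  (ℓ = 0 ∧ 0 < t ∧ ∃ b, 𝔸 = {b}) ∨
  (0 < ℓ ∧ ∃ c : Fin t → Fin ℓ, Monotone c ∧ Function.Surjective c ∧
    ∃ A : (i : Fin ℓ) → Set ({j : Fin t // c j = i} → X),
      (∀ i, (A i).Finite ∧ (A i).ncard = m) ∧
      𝔸 = { b | ∀ i, (fun j : {j : Fin t // c j = i} => b j.1) ∈ A i })

/-- The underlying set of a set of tuples: the set of all coordinates of its tuples. -/
def underlying {X : Type*} {t : ℕ} (𝔹 : Set (Fin t → X)) : Set X :=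
  { x | ∃ b ∈ 𝔹, ∃ j, b j = x }

/-- A family `F` of subsets of `Y` shatters `A ⊆ Y` if every subset of `A` is cut out by a
member of `F`. -/
def Shatters {Y : Type*} (F : Set (Set Y)) (A : Set Y) : Prop :=
  ∀ B ⊆ A, ∃ S ∈ F, S ∩ A = B
/-- `𝔸` is an `(ℓ,t)`-box of height `K` and `𝔸'` is a sub-box of `𝔸` of height `m`
(with respect to a common decomposition): `𝔸 = A₁⋯A_ℓ`, `𝔸' = A₁'⋯A_ℓ'` with `A_i' ⊆ A_i`.
For `ℓ = 0` the only sub-box of a box is the box itself. -/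
def IsSubBoxPair (X : Type*) (ℓ t K m : ℕ) (𝔸 𝔸' : Set (Fin t → X)) : Prop :=
  (ℓ = 0 ∧ 𝔸' = 𝔸 ∧ IsBoxOfHeight X ℓ t K 𝔸) ∨
  (0 < ℓ ∧ ∃ c : Fin t → Fin ℓ, Monotone c ∧ Function.Surjective c ∧
    ∃ A A' : (i : Fin ℓ) → Set ({j : Fin t // c j = i} → X),
      (∀ i, (A i).Finite ∧ (A i).ncard = K) ∧
      (∀ i, (A' i).Finite ∧ (A' i).ncard = m) ∧
      (∀ i, A' i ⊆ A i) ∧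
      𝔸 = { b | ∀ i, (fun j : {j : Fin t // c j = i} => b j.1) ∈ A i } ∧
      𝔸' = { b | ∀ i, (fun j : {j : Fin t // c j = i} => b j.1) ∈ A' i })
/-- The data of a complete equality type in `k` variables over a parameter set contained in `X`:
which pairs of variables are equal, and which variables are equal to which parameters. -/
def EqType (X : Type*) (k : ℕ) :=
  (Fin k → Fin k → Prop) × (Fin k → X → Prop)

/-- The complete equality type over `A ⊆ X` (whose elements are identified with elements of `W`
via `ι`, assumed injective on `A`) realized by the tuple `u : Fin k → W`. -/
def eqTypeOf {X : Type*} {W : Type*} (A : Set X) (ι : X → W) {k : ℕ} (u : Fin k → W) :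
    EqType X k :=
  ⟨fun i j => u i = u j, fun i x => x ∈ A ∧ u i = ι x⟩

/-- `S_k^∅(A)`: the set of complete equality types in `k` variables over `A`; every consistent
such type is realized by a tuple in `X ⊕ Fin k` (with `X` embedded by `Sum.inl`). -/
def EqTypes {X : Type*} (A : Set X) (k : ℕ) : Set (EqType X k) :=
  Set.range fun u : Fin k → (X ⊕ Fin k) => eqTypeOf A Sum.inl u
/-- The structure induced on `α` by pulling back a structure on `β` along a map `f : α → β`
(for relational languages). -/
noncomputable def pullback {L : FirstOrder.Language.{u, v}} [L.IsRelational]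
    {α : Type*} {β : Type*} (f : α → β) (M : L.Structure β) : L.Structure α where
  funMap := fun {_} F _ => isEmptyElim F
  RelMap := fun {_} R x => M.RelMap R (f ∘ x)

/-- A hereditary `L`-property: a family of finite `L`-structures (one set of structures with
universe `Fin n = {1,…,n}` for each `n`), closed under pulling back along arbitrary injections;
this encodes closure under isomorphism and under induced substructures. -/
structure HerProp (L : FirstOrder.Language.{u, v}) [L.IsRelational] where
  sets : ∀ n : ℕ, Set (L.Structure (Fin n))
  hereditary : ∀ {m n : ℕ} (f : Fin m ↪ Fin n) (M : L.Structure (Fin n)),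
    M ∈ sets n → pullback (⇑f) M ∈ sets m

/-- Realization of a first-order formula in a structure given as a term. -/
def realizeIn {L : FirstOrder.Language.{u, v}} {W : Type w} (M : L.Structure W)
    {α : Type*} (φ : L.Formula α) (v : α → W) : Prop :=
  letI := M
  φ.Realize v

/-- The `φ`-type (identified with its positive part, a subset of `𝔸`) of the tuple `a` over the
set of parameter tuples `𝔸` (transferred into `W` via `ι`), in the structure `M`. -/
def phiTypeOf {L : FirstOrder.Language.{u, v}} {W : Type w} (M : L.Structure W) {s t : ℕ}
    (φ : L.Formula (Fin s ⊕ Fin t)) {X : Type*} (𝔸 : Set (Fin t → X)) (ι : X → W)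
    (a : Fin s → W) : Set (Fin t → X) :=
  { b ∈ 𝔸 | realizeIn M φ (Sum.elim a (ι ∘ b)) }

variable {L : FirstOrder.Language.{u, v}} [L.IsRelational]

/-- `S_φ^H(𝔸)`: the set of `φ`-types over `𝔸` (identified with their positive parts)
realized in some member of `H` (the parameters being transferred into the member by an
injection on the underlying set of `𝔸`). -/
def Sphi (H : HerProp L) {s t : ℕ} (φ : L.Formula (Fin s ⊕ Fin t)) {X : Type*}
    (𝔸 : Set (Fin t → X)) : Set (Set (Fin t → X)) :=
  { q | ∃ n : ℕ, ∃ M ∈ H.sets n, ∃ ι : X → Fin n, Set.InjOn ι (underlying 𝔸) ∧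
      ∃ a : Fin s → Fin n, phiTypeOf M φ 𝔸 ι a = q }

/-- `S_{φ,m}^H(𝔸,ρ)`: the set of unions `p₁(x̄₁) ∪ ⋯ ∪ p_m(x̄_m)` (identified with the tuple
`(p₁,…,p_m)` of positive parts of `φ`-types over `𝔸`) realized in some member of `H` by
pairwise distinct `s`-tuples `ā₁,…,ā_m` such that moreover each pair `(ā_i,ā_j)`, `i ≠ j`,
realizes the equality type `ρ` over the underlying set of `𝔸`. -/
def SphiM (H : HerProp L) {s t : ℕ} (φ : L.Formula (Fin s ⊕ Fin t)) (m : ℕ) {X : Type*}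
    (𝔸 : Set (Fin t → X)) (ρ : EqType X (s + s)) : Set (Fin m → Set (Fin t → X)) :=
  { P | ∃ n : ℕ, ∃ M ∈ H.sets n, ∃ ι : X → Fin n, Set.InjOn ι (underlying 𝔸) ∧
      ∃ a : Fin m → Fin s → Fin n, Function.Injective a ∧
        (∀ i, phiTypeOf M φ 𝔸 ι (a i) = P i) ∧
        (∀ i j, i ≠ j → eqTypeOf (underlying 𝔸) ι (Fin.append (a i) (a j)) = ρ) }

/-- The witness predicate for `VC*_ℓ(φ,H) ≥ m`: there are an `(ℓ,t)`-box `𝔸` of height `m`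
and an equality type `ρ ∈ S_{2s}^∅(𝔸)` with `|S_{φ,m}^H(𝔸,ρ)| = 2^(m^(ℓ+1))`. -/
def VCstarWitness (H : HerProp L) (ℓ : ℕ) {s t : ℕ} (φ : L.Formula (Fin s ⊕ Fin t))
    (m : ℕ) : Prop :=
  ∃ 𝔸 : Set (Fin t → ℕ), IsBoxOfHeight ℕ ℓ t m 𝔸 ∧
    ∃ ρ ∈ EqTypes (underlying 𝔸) (s + s),
      Nat.card (SphiM H φ m 𝔸 ρ) = 2 ^ m ^ (ℓ + 1)

/-- `VC*_ℓ(H)`, as an extended natural number: the supremum over quantifier-free partitioned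
formulas `φ(x̄;ȳ)` of `VC*_ℓ(φ,H)`. -/
noncomputable def VCstar (H : HerProp L) (ℓ : ℕ) : ℕ∞ :=
  sSup { N : ℕ∞ | ∃ m : ℕ, N = (m : ℕ∞) ∧ ∃ (s t : ℕ) (φ : L.Formula (Fin s ⊕ Fin t)),
      φ.IsQF ∧ VCstarWitness H ℓ φ m }

/-- The restriction of an equality type to the smaller parameter set `A'`. -/
def EqType.restrict {X : Type*} {k : ℕ} (A' : Set X) (ρ : EqType X k) : EqType X k :=
  ⟨ρ.1, fun i x => x ∈ A' ∧ ρ.2 i x⟩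

/-- product box equiv -/
def boxEquiv {X : Type*} {ℓ t : ℕ} (c : Fin t → Fin ℓ)
    (A : (i : Fin ℓ) → Set ({j : Fin t // c j = i} → X)) :
    {b : Fin t → X // ∀ i, (fun j : {j : Fin t // c j = i} => b j.1) ∈ A i} ≃
      ((i : Fin ℓ) → ↥(A i)) := by
  have aux : ∀ (f : (i : Fin ℓ) → ↥(A i)) (j : Fin t) (i : Fin ℓ) (h : c j = i),
      (f (c j)).1 ⟨j, rfl⟩ = (f i).1 ⟨j, h⟩ := by
    intro f j i h; subst h; rfl
  refine
  { toFun := fun b i => ⟨fun j => b.1 j.1, b.2 i⟩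
    invFun := fun f => ⟨fun j => (f (c j)).1 ⟨j, rfl⟩, ?_⟩
    left_inv := ?_
    right_inv := ?_ }
  · intro i
    have : (fun j : {j : Fin t // c j = i} => (f (c j.1)).1 ⟨j.1, rfl⟩) = (f i).1 := by
      funext j; rw [aux f j.1 i j.2]
    rw [this]; exact (f i).2
  · intro b; ext j; rfl
  · intro f; funext i; apply Subtype.ext; funext j
    show (f (c j.1)).1 ⟨j.1, rfl⟩ = (f i).1 j
    rw [aux f j.1 i j.2]

theorem boxCard {X : Type*} {ℓ t : ℕ} (c : Fin t → Fin ℓ)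
    (A : (i : Fin ℓ) → Set ({j : Fin t // c j = i} → X)) {K : ℕ}
    (hA : ∀ i, (A i).Finite ∧ (A i).ncard = K) :
    ({ b : Fin t → X | ∀ i, (fun j : {j : Fin t // c j = i} => b j.1) ∈ A i }).Finite ∧
    ({ b : Fin t → X | ∀ i, (fun j : {j : Fin t // c j = i} => b j.1) ∈ A i }).ncard = K ^ ℓ := by
  have e := boxEquiv c A
  have hf : ∀ i, Finite ↥(A i) := fun i => (hA i).1
  have hpi : Finite ((i : Fin ℓ) → ↥(A i)) := inferInstance
  have hfin : Finite ↥{ b : Fin t → X | ∀ i, (fun j : {j : Fin t // c j = i} => b j.1) ∈ A i } :=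
    Finite.of_equiv _ e.symm
  refine ⟨Set.finite_coe_iff.mp hfin, ?_⟩
  rw [← Nat.card_coe_set_eq]
  show Nat.card {b : Fin t → X // ∀ i, (fun j : {j : Fin t // c j = i} => b j.1) ∈ A i} = _
  rw [Nat.card_congr e, Nat.card_pi]
  calc ∏ i, Nat.card ↥(A i) = ∏ _i : Fin ℓ, K :=
        Finset.prod_congr rfl fun i _ => by rw [Nat.card_coe_set_eq, (hA i).2]
    _ = K ^ ℓ := by simp

def piPow {V : Type*} (A : Set V) (k : ℕ) :
    {P : Fin k → Set V // ∀ i, P i ⊆ A} ≃ (Fin k → Set ↥A) where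
  toFun P i := {v : ↥A | v.1 ∈ P.1 i}
  invFun F := ⟨fun i => {v : V | ∃ h : v ∈ A, (⟨v, h⟩ : ↥A) ∈ F i}, fun i v hv => hv.1⟩
  left_inv P := by
    apply Subtype.ext; funext i; ext v
    simp only [Set.mem_setOf_eq]
    exact ⟨fun ⟨h, hv⟩ => hv, fun hv => ⟨P.2 i hv, hv⟩⟩
  right_inv F := by
    funext i; ext v
    simp only [Set.mem_setOf_eq]
    constructor
    · rintro ⟨h, hv⟩; rwa [show (⟨v.1, h⟩ : ↥A) = v from Subtype.ext rfl] at hv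
    · intro hv; exact ⟨v.2, by rwa [show (⟨v.1, v.2⟩ : ↥A) = v from Subtype.ext rfl]⟩

theorem card_piPow {V : Type*} (A : Set V) (hA : A.Finite) (k : ℕ) :
    Nat.card {P : Fin k → Set V | ∀ i, P i ⊆ A} = 2 ^ (A.ncard * k) ∧
    ({P : Fin k → Set V | ∀ i, P i ⊆ A}).Finite := by
  have : Finite ↥A := hA
  have hcs : Nat.card (Set ↥A) = 2 ^ A.ncard := by
    rw [show (Set ↥A) = (↥A → Prop) from rfl, Nat.card_fun, ← Nat.card_coe_set_eq]
    congr 1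
    simp [Nat.card_eq_fintype_card]
  have e := piPow A k
  have hfin : Finite ↥{P : Fin k → Set V | ∀ i, P i ⊆ A} := by
    have : Finite (Fin k → Set ↥A) := by
      have : Finite (Set ↥A) := by
        rw [show (Set ↥A) = (↥A → Prop) from rfl]; infer_instance
      infer_instance
    exact Finite.of_equiv _ e.symm
  refine ⟨?_, Set.finite_coe_iff.mp hfin⟩
  show Nat.card {P : Fin k → Set V // ∀ i, P i ⊆ A} = _
  rw [Nat.card_congr e, Nat.card_fun, hcs, Nat.card_eq_fintype_card, Fintype.card_fin, ← pow_mul]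

theorem pick3 {K : ℕ} (hK : 3 ≤ K) (i i' : Fin K) : ∃ j : Fin K, j ≠ i ∧ j ≠ i' := by
  have hi := i.2; have hi' := i'.2
  obtain ⟨v, hv, h1, h2⟩ : ∃ v, v < K ∧ v ≠ i.val ∧ v ≠ i'.val := by
    refine ⟨if 0 = i.val ∨ 0 = i'.val then (if 1 = i.val ∨ 1 = i'.val then 2 else 1) else 0,
      ?_, ?_, ?_⟩ <;> split_ifs <;> omega
  exact ⟨⟨v, hv⟩, fun h => h1 (congrArg Fin.val h), fun h => h2 (congrArg Fin.val h)⟩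


theorem underlying_mono {X : Type*} {t : ℕ} {𝔹 𝔹2 : Set (Fin t → X)} (h : 𝔹 ⊆ 𝔹2) :
    underlying 𝔹 ⊆ underlying 𝔹2 := by
  rintro x ⟨b, hb, j, rfl⟩; exact ⟨b, h hb, j, rfl⟩

theorem phiTypeOf_restrict {L : FirstOrder.Language.{u, v}} {W : Type w} (M : L.Structure W)
    {s t : ℕ} (φ : L.Formula (Fin s ⊕ Fin t)) {X : Type*} {𝔸 𝔸' : Set (Fin t → X)}
    (h : 𝔸' ⊆ 𝔸) (ι : X → W) (a : Fin s → W) :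
    phiTypeOf M φ 𝔸' ι a = phiTypeOf M φ 𝔸 ι a ∩ 𝔸' := by
  ext b
  constructor
  · intro hb; exact ⟨⟨h hb.1, hb.2⟩, hb.1⟩
  · rintro ⟨⟨_, hr⟩, hb'⟩; exact ⟨hb', hr⟩

theorem eqTypeOf_restrict {X : Type*} {W : Type*} {A' A : Set X} (h : A' ⊆ A) (ι : X → W)
    {k : ℕ} (u : Fin k → W) :
    eqTypeOf A' ι u = EqType.restrict A' (eqTypeOf A ι u) := by
  unfold eqTypeOf EqType.restrict
  refine Prod.ext rfl ?_
  funext p x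
  apply propext
  exact ⟨fun ⟨hx, he⟩ => ⟨hx, h hx, he⟩, fun ⟨hx, _, he⟩ => ⟨hx, he⟩⟩

theorem subBoxPair_facts {X : Type*} {ℓ t K m : ℕ} {𝔸 𝔸' : Set (Fin t → X)}
    (h : IsSubBoxPair X ℓ t K m 𝔸 𝔸') :
    (ℓ = 0 ∧ 𝔸 = ∅ ∧ 𝔸' = ∅) ∨
    (𝔸' ⊆ 𝔸 ∧ 𝔸.Finite ∧ 𝔸.ncard = K ^ ℓ ∧ 𝔸'.Finite ∧ 𝔸'.ncard = m ^ ℓ) := by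
  rcases h with ⟨hl, heq, hbox⟩ | ⟨hl, c, _, _, A, A', hA, hA', hsub, h𝔸, h𝔸'⟩
  · subst hl
    rcases hbox with ⟨_, _, hemp⟩ | ⟨_, _, b, hb⟩ | ⟨h0, _⟩
    · exact Or.inl ⟨rfl, hemp, heq ▸ hemp⟩
    · refine Or.inr ⟨heq ▸ Set.Subset.rfl, ?_, ?_, ?_, ?_⟩ <;>
        simp [hb, heq, Set.ncard_singleton]
    · exact absurd h0 (lt_irrefl 0)
  · have hKbox := boxCard c A hA
    have hmbox := boxCard c A' hA'
    rw [← h𝔸] at hKbox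
    rw [← h𝔸'] at hmbox
    refine Or.inr ⟨?_, hKbox.1, hKbox.2, hmbox.1, hmbox.2⟩
    rw [h𝔸, h𝔸']
    intro b hb i
    exact hsub i (hb i)
/-- **Lemma 3.2(d).**  For every quantifier-free `φ(x̄;ȳ)`, `ℓ ≥ 0` and `N ≥ m ≥ 1` there is
`K₀` such that for all `K ≥ K₀`: if `𝔸` is an `(ℓ,|ȳ|)`-box of height `K` with
`|S_φ^H(𝔸)| = 2^(K^ℓ)`, `𝔸' ⊆ 𝔸` is a sub-box of height `m`, and
`|S_{φ,K}^H(𝔸,ρ)| = 2^(K^(ℓ+1))` for some `ρ ∈ S_{2|x̄|}^∅(𝔸)`, then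
`|S_{φ,m}^H(𝔸',ρ↾𝔸')| = 2^(m^(ℓ+1))`, and there are `M ∈ H` and `𝔻 ⊆ M^(m|x̄|)` such that
`𝔻` contains one realization of every element of `S_{φ,m}^H(𝔸',ρ↾𝔸')` and `M` contains at
least `N` elements lying neither in (the image of) the underlying set of `𝔸'` nor among the
coordinates of any tuple of `𝔻`. -/
theorem statement11 {L : FirstOrder.Language.{u, v}} [L.IsRelational]
    [∀ n, Finite (L.Relations n)] (H : HerProp L) {s t : ℕ}
    (φ : L.Formula (Fin s ⊕ Fin t)) (hφ : φ.IsQF) (ℓ N m : ℕ) (hm : 1 ≤ m) (hNm : m ≤ N) :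
    ∃ K₀ : ℕ, ∀ K, K₀ ≤ K → ∀ (X : Type w) (𝔸 𝔸' : Set (Fin t → X))
      (ρ : EqType X (s + s)),
      IsSubBoxPair X ℓ t K m 𝔸 𝔸' →
      Nat.card (Sphi H φ 𝔸) = 2 ^ K ^ ℓ →
      ρ ∈ EqTypes (underlying 𝔸) (s + s) →
      Nat.card (SphiM H φ K 𝔸 ρ) = 2 ^ K ^ (ℓ + 1) →
      Nat.card (SphiM H φ m 𝔸' (EqType.restrict (underlying 𝔸') ρ)) = 2 ^ m ^ (ℓ + 1) ∧
      ∃ n : ℕ, ∃ M ∈ H.sets n, ∃ ι : X → Fin n, Set.InjOn ι (underlying 𝔸') ∧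
        ∃ 𝔻 : Set (Fin m → Fin s → Fin n),
          (∀ P ∈ SphiM H φ m 𝔸' (EqType.restrict (underlying 𝔸') ρ),
            ∃ D ∈ 𝔻, Function.Injective D ∧ ∀ i, phiTypeOf M φ 𝔸' ι (D i) = P i) ∧
          ∃ e : Fin N → Fin n, Function.Injective e ∧
            ∀ k, (∀ x ∈ underlying 𝔸', ι x ≠ e k) ∧
              (∀ D ∈ 𝔻, ∀ i j, D i j ≠ e k) := by
  classical
  set T := 2 ^ m ^ (ℓ + 1) with hTdef
  have hm' : 0 < m := hm
  have hT2 : 2 ≤ T := by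
    have h1 : 1 ≤ m ^ (ℓ + 1) := Nat.one_le_pow _ _ hm'
    calc 2 = 2 ^ 1 := (pow_one 2).symm
      _ ≤ T := Nat.pow_le_pow_right (by norm_num) h1
  refine ⟨m * T + N, ?_⟩
  intro K hK X 𝔸 𝔸' ρ hbox _hSphi _hρ hSphiM
  have hmT : m * T ≤ K := le_trans (Nat.le_add_right _ _) hK
  have hK3 : 3 ≤ K := by
    have : 2 ≤ m * T := le_trans hT2 (Nat.le_mul_of_pos_left T hm')
    omega
  have hK0 : 0 < K := lt_of_lt_of_le (by norm_num) hK3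
  have hK1 : 1 < K := lt_of_lt_of_le (by norm_num) hK3
  -- box facts
  rcases subBoxPair_facts hbox with ⟨hl0, hAe, _⟩ | ⟨hsub, hfinA, hcardA, hfinA', hcardA'⟩
  · -- degenerate case: 𝔸 = ∅, contradiction with the cardinality of SphiM
    exfalso
    subst hl0
    have hss : SphiM H φ K 𝔸 ρ ⊆ {fun _ => (∅ : Set (Fin t → X))} := by
      rintro P ⟨n, M, _, ι, _, a, _, htypes, _⟩
      have : P = fun _ => ∅ := by
        funext i
        rw [← htypes i]
        ext b
        exact ⟨fun hb => by rw [hAe] at hb; exact hb.1, fun hb => absurd hb (notMem_empty b)⟩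
      simp [this]
    have hle : Nat.card (SphiM H φ K 𝔸 ρ) ≤ 1 := by
      rw [Nat.card_coe_set_eq]
      calc (SphiM H φ K 𝔸 ρ).ncard ≤ ({fun _ => (∅ : Set (Fin t → X))} : Set _).ncard :=
            Set.ncard_le_ncard hss (Set.finite_singleton _)
        _ = 1 := Set.ncard_singleton _
    rw [hSphiM] at hle
    have h21 : (2:ℕ) ^ 1 ≤ 2 ^ K ^ (0 + 1) :=
      Nat.pow_le_pow_right (by norm_num) (by simp; omega)
    omega
  -- main case
  have hsubU : underlying 𝔸' ⊆ underlying 𝔸 := underlying_mono hsub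
  -- the big SphiM is everything
  have hEqBig : SphiM H φ K 𝔸 ρ = {P : Fin K → Set (Fin t → X) | ∀ i, P i ⊆ 𝔸} := by
    have hBsub : SphiM H φ K 𝔸 ρ ⊆ {P : Fin K → Set (Fin t → X) | ∀ i, P i ⊆ 𝔸} := by
      rintro P ⟨n, M, _, ι, _, a, _, htypes, _⟩ i
      rw [← htypes i]
      exact fun b hb => hb.1
    have hcardBig := card_piPow 𝔸 hfinA K
    refine Set.eq_of_subset_of_ncard_le hBsub ?_ hcardBig.2
    rw [← Nat.card_coe_set_eq, ← Nat.card_coe_set_eq, hSphiM, hcardBig.1, hcardA,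
      pow_succ]
  -- small superset enumeration
  have hcardSmall := card_piPow 𝔸' hfinA' m
  have hfinS : Finite ↥{P : Fin m → Set (Fin t → X) | ∀ i, P i ⊆ 𝔸'} :=
    hcardSmall.2.to_subtype
  have hcardS : Nat.card ↥{P : Fin m → Set (Fin t → X) | ∀ i, P i ⊆ 𝔸'} = T := by
    rw [hcardSmall.1, hcardA', hTdef, pow_succ]
  obtain ⟨g, hgsub, hgsurj⟩ :
      ∃ g : Fin T → (Fin m → Set (Fin t → X)), (∀ j r, g j r ⊆ 𝔸') ∧
        ∀ P', (∀ i, P' i ⊆ 𝔸') → ∃ j, g j = P' := by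
    obtain ⟨e'⟩ : Nonempty (↥{P : Fin m → Set (Fin t → X) | ∀ i, P i ⊆ 𝔸'} ≃ Fin T) :=
      ⟨Finite.equivFinOfCardEq hcardS⟩
    exact ⟨fun j => (e'.symm j).1, fun j r => (e'.symm j).2 r,
      fun P' h => ⟨e' ⟨P', h⟩, congrArg Subtype.val (e'.symm_apply_apply ⟨P', h⟩)⟩⟩
  -- index arithmetic
  have hidxlt : ∀ (j : Fin T) (r : Fin m), m * (j : ℕ) + (r : ℕ) < m * T := by
    intro j r
    calc m * (j : ℕ) + (r : ℕ) < m * (j : ℕ) + m := Nat.add_lt_add_left r.2 _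
      _ = m * ((j : ℕ) + 1) := (Nat.mul_succ m (j : ℕ)).symm
      _ ≤ m * T := Nat.mul_le_mul_left m j.2
  have heidxlt : ∀ k : Fin N, m * T + (k : ℕ) < K :=
    fun k => lt_of_lt_of_le (Nat.add_lt_add_left k.2 (m * T)) hK
  let idx : Fin T → Fin m → Fin K := fun j r =>
    ⟨m * (j : ℕ) + (r : ℕ), lt_of_lt_of_le (hidxlt j r) hmT⟩
  let eidx : Fin N → Fin K := fun k => ⟨m * T + (k : ℕ), heidxlt k⟩
  have hidx_ne : ∀ (j : Fin T) (r r' : Fin m), r ≠ r' → idx j r ≠ idx j r' := by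
    intro j r r' hrr' h
    apply hrr'
    have hv : m * (j : ℕ) + (r : ℕ) = m * (j : ℕ) + (r' : ℕ) := congrArg Fin.val h
    exact Fin.ext (Nat.add_left_cancel hv)
  -- the big joint type
  obtain ⟨P, hPidx, hPsub⟩ :
      ∃ P : Fin K → Set (Fin t → X), (∀ (j : Fin T) (r : Fin m), P (idx j r) = g j r) ∧
        ∀ i, P i ⊆ 𝔸 := by
    have gcongr : ∀ (j j' : Fin T) (r r' : Fin m), j = j' → r = r' → g j r = g j' r' := by
      rintro j _ r _ rfl rfl; rfl
    refine ⟨fun i =>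
      if h : (i : ℕ) < m * T then
        g ⟨(i : ℕ) / m, by rw [Nat.div_lt_iff_lt_mul hm', Nat.mul_comm]; exact h⟩
          ⟨(i : ℕ) % m, Nat.mod_lt _ hm'⟩
      else ∅, ?_, ?_⟩
    · intro j r
      have hlt : ((idx j r : Fin K) : ℕ) < m * T := hidxlt j r
      show (if h : _ then _ else _) = g j r
      rw [dif_pos hlt]
      refine gcongr _ j _ r (Fin.ext ?_) (Fin.ext ?_)
      · show (m * (j : ℕ) + (r : ℕ)) / m = (j : ℕ)
        rw [Nat.mul_add_div hm', Nat.div_eq_of_lt r.2, Nat.add_zero]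
      · show (m * (j : ℕ) + (r : ℕ)) % m = (r : ℕ)
        rw [Nat.mul_add_mod, Nat.mod_eq_of_lt r.2]
    · intro i
      show (if h : (i : ℕ) < m * T then _ else _) ⊆ 𝔸
      split
      · exact fun b hb => hsub (hgsub _ _ hb)
      · exact Set.empty_subset _
  have hPmem : P ∈ SphiM H φ K 𝔸 ρ := by rw [hEqBig]; exact hPsub
  obtain ⟨n, M, hM, ι, hι, a, hainj, hatypes, harho⟩ := hPmem
  -- block realizations
  have hιA' : Set.InjOn ι (underlying 𝔸') := hι.mono hsubU
  have hblocktypes : ∀ (j : Fin T) (r : Fin m), phiTypeOf M φ 𝔸' ι (a (idx j r)) = g j r := by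
    intro j r
    rw [phiTypeOf_restrict M φ hsub, hatypes (idx j r), hPidx j r,
      Set.inter_eq_left.mpr (hgsub j r)]
  have hblockinj : ∀ j : Fin T, Function.Injective (fun r => a (idx j r)) := by
    intro j r r' h
    by_contra hne
    exact hidx_ne j r r' hne (hainj h)
  have hblockrho : ∀ (j : Fin T) (r r' : Fin m), r ≠ r' →
      eqTypeOf (underlying 𝔸') ι (Fin.append (a (idx j r)) (a (idx j r'))) =
        EqType.restrict (underlying 𝔸') ρ := by
    intro j r r' hrr'
    rw [eqTypeOf_restrict hsubU, harho _ _ (hidx_ne j r r' hrr')]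
  have hgmem : ∀ j : Fin T,
      g j ∈ SphiM H φ m 𝔸' (EqType.restrict (underlying 𝔸') ρ) :=
    fun j => ⟨n, M, hM, ι, hιA', fun r => a (idx j r), hblockinj j,
      hblocktypes j, fun r r' h => hblockrho j r r' h⟩
  -- the small SphiM is everything
  have hEqSmall : SphiM H φ m 𝔸' (EqType.restrict (underlying 𝔸') ρ) =
      {P : Fin m → Set (Fin t → X) | ∀ i, P i ⊆ 𝔸'} := by
    apply Set.Subset.antisymm
    · rintro Q ⟨n', M', _, ι', _, a', _, htypes', _⟩ i
      rw [← htypes' i]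
      exact fun b hb => hb.1
    · intro P' hP'
      obtain ⟨j, hj⟩ := hgsurj P' hP'
      exact hj ▸ hgmem j
  constructor
  · rw [hEqSmall, hcardSmall.1, hcardA', hTdef, pow_succ]
  -- second part: the uniform realization and extra elements
  -- varying coordinate
  have h01 : (⟨0, hK0⟩ : Fin K) ≠ ⟨1, hK1⟩ := by
    intro h; exact absurd (congrArg Fin.val h) (by norm_num)
  obtain ⟨p, hp⟩ : ∃ p, a ⟨0, hK0⟩ p ≠ a ⟨1, hK1⟩ p :=
    Function.ne_iff.mp (fun h => h01 (hainj h))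
  have hR1 : ∀ (i j : Fin K), i ≠ j → ∀ (q q' : Fin s),
      (ρ.1 (Fin.castAdd s q) (Fin.natAdd s q') ↔ a i q = a j q') := by
    intro i j hij q q'
    rw [← harho i j hij]
    show Fin.append (a i) (a j) _ = Fin.append (a i) (a j) _ ↔ _
    rw [Fin.append_left, Fin.append_right]
  have hR2 : ∀ (i j : Fin K), i ≠ j → ∀ (q : Fin s) (x : X),
      (ρ.2 (Fin.castAdd s q) x ↔ (x ∈ underlying 𝔸 ∧ a i q = ι x)) := by
    intro i j hij q x
    rw [← harho i j hij]
    show (x ∈ underlying 𝔸 ∧ Fin.append (a i) (a j) _ = ι x) ↔ _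
    rw [Fin.append_left]
  have hvary : ∀ i j : Fin K, i ≠ j → a i p ≠ a j p := by
    intro i j hij h
    exact hp ((hR1 _ _ h01 p p).mp ((hR1 i j hij p p).mpr h))
  have hcross : ∀ (i i' : Fin K) (q : Fin s), i' ≠ i → a i' q ≠ a i p := by
    intro i i' q hne h
    obtain ⟨j, hj1, hj2⟩ := pick3 hK3 i i'
    have h1 : ρ.1 (Fin.castAdd s q) (Fin.natAdd s p) := (hR1 i' i hne q p).mpr h
    have h2 : a i' q = a j p := (hR1 i' j (fun hh => hj2 hh.symm) q p).mp h1
    exact hvary i j (fun hh => hj1 hh.symm) (h.symm.trans h2)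
  have hparam : ∀ (i : Fin K) (x : X), x ∈ underlying 𝔸 → ι x ≠ a i p := by
    intro i x hx h
    obtain ⟨j, hj, _⟩ := pick3 hK3 i i
    have h1 : ρ.2 (Fin.castAdd s p) x := (hR2 i j (fun hh => hj hh.symm) p x).mpr ⟨hx, h.symm⟩
    obtain ⟨j0, hj0, _⟩ := pick3 hK3 ⟨0, hK0⟩ ⟨0, hK0⟩
    obtain ⟨j1, hj1, _⟩ := pick3 hK3 ⟨1, hK1⟩ ⟨1, hK1⟩
    have h2 : a ⟨0, hK0⟩ p = ι x :=
      ((hR2 _ j0 (fun hh => hj0 hh.symm) p x).mp h1).2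
    have h3 : a ⟨1, hK1⟩ p = ι x :=
      ((hR2 _ j1 (fun hh => hj1 hh.symm) p x).mp h1).2
    exact hvary _ _ h01 (h2.trans h3.symm)
  have heidx_ne_idx : ∀ (k : Fin N) (j : Fin T) (r : Fin m), idx j r ≠ eidx k := by
    intro k j r h
    have h1 : m * (j : ℕ) + (r : ℕ) = m * T + (k : ℕ) := congrArg Fin.val h
    have h2 := hidxlt j r
    exact (Nat.ne_of_lt (lt_of_lt_of_le h2 (Nat.le_add_right _ _))) h1
  refine ⟨n, M, hM, ι, hιA',
    Set.range (fun j : Fin T => fun r : Fin m => a (idx j r)), ?_, fun k => a (eidx k) p,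
    ?_, ?_⟩
  · -- every small joint type is realized by a member of 𝔻
    intro P' hP'
    have hP'sub : ∀ i, P' i ⊆ 𝔸' := by rw [hEqSmall] at hP'; exact hP'
    obtain ⟨j, hj⟩ := hgsurj P' hP'sub
    refine ⟨fun r => a (idx j r), Set.mem_range_self _, hblockinj j, ?_⟩
    intro i
    rw [hblocktypes j i, hj]
  · -- injectivity of the extra elements
    intro k k' h
    by_contra hne
    have hee : eidx k ≠ eidx k' := by
      intro hh
      apply hne
      have hv : m * T + (k : ℕ) = m * T + (k' : ℕ) := congrArg Fin.val hh
      exact Fin.ext (Nat.add_left_cancel hv)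
    exact hvary _ _ hee h
  · intro k
    constructor
    · intro x hx
      exact hparam (eidx k) x (hsubU hx)
    · rintro D ⟨j, rfl⟩ i jq
      exact hcross (eidx k) (idx j i) jq (heidx_ne_idx k j i)

end PaperVC
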